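/- Fix points p₀, p₁, p₂, p₃ ∈ ℝ² and a constant k > 0. For ω > 0 define C_ω(u) = (B₀(u)·p₀ + ω·B₁(u)·p₁ + kω²·B₂(u)·p₂ + B₃(u)·p₃) / (B₀(u) + ω·B₁(u) + kω²·B₂(u) + B₃(u)). Then C_ω converges to the constant function p₂ in L¹ on [0,1]: the integral ∫₀¹ ‖C_ω(u) − p₂‖ du tends to 0 as ω → +∞ (even though the pointwise limit at u = 0 is p₀ and at u = 1 is p₃, so the convergence is not uniform on [0,1]). -/

import Mathlib

/-!
On `(0,1)` all four Bernstein values are positive, so `C_ω(u)` is a convex combination of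
`p₀, …, p₃` in which the weight `kω²B₂(u)` of `p₂` dominates the others as `ω → ∞`. Hence `‖C_ω(u) − p₂‖ = O(1/ω)` pointwise on `(0,1)`, while `‖C_ω(u) − p₂‖` is bounded by
`Σ ‖p_j − p₂‖` uniformly, and dominated convergence finishes the argument.
-/

open Filter Topology MeasureTheory Set

noncomputable def cubicBernstein (j : ℕ) (u : ℝ) : ℝ :=
  (Nat.choose 3 j : ℝ) * u ^ j * (1 - u) ^ (3 - j)

lemma cubicBernstein_pos {j : ℕ} (hj : j ≤ 3) {u : ℝ} (hu : u ∈ Ioo (0 : ℝ) 1) :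
    0 < cubicBernstein j u := by
  obtain ⟨hu0, hu1⟩ := hu
  have : 0 < 1 - u := sub_pos.2 hu1
  unfold cubicBernstein
  have : (0 : ℝ) < Nat.choose 3 j := Nat.cast_pos.2 (Nat.choose_pos hj)
  positivity

@[fun_prop]
lemma continuous_cubicBernstein (j : ℕ) : Continuous (cubicBernstein j) := by
  unfold cubicBernstein; fun_prop

lemma tendsto_add_mul_div_mul_sq_atTop (a b c : ℝ) :
    Tendsto (fun ω : ℝ => (a + ω * b) / (c * ω ^ 2)) atTop (𝓝 0) := by
  have h := tendsto_inv_atTop_zero (𝕜 := ℝ)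
  have hlim : Tendsto (fun ω : ℝ => a / c * ω⁻¹ ^ 2 + b / c * ω⁻¹) atTop (𝓝 0) := by
    simpa using ((h.pow 2).const_mul (a / c)).add (h.const_mul (b / c))
  refine hlim.congr' ?_
  filter_upwards [eventually_ne_atTop 0] with ω hω
  rcases eq_or_ne c 0 with rfl | hc
  · simp
  · field_simp

section WeightedAverage

variable {E : Type*} [NormedAddCommGroup E] [NormedSpace ℝ E]

lemma norm_weightedAverage_sub_le {a b c d : ℝ} (ha : 0 ≤ a) (hb : 0 ≤ b) (hd : 0 ≤ d)
    (hS : 0 < a + b + c + d) (x y z w : E) :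
    ‖(a + b + c + d)⁻¹ • (a • x + b • y + c • z + d • w) - z‖ ≤
      (a * ‖x - z‖ + b * ‖y - z‖ + d * ‖w - z‖) / (a + b + c + d) := by
  have hsub : (a + b + c + d)⁻¹ • (a • x + b • y + c • z + d • w) - z =
      (a + b + c + d)⁻¹ • (a • (x - z) + b • (y - z) + d • (w - z)) := by
    rw [eq_inv_smul_iff₀ hS.ne', smul_sub, smul_inv_smul₀ hS.ne']
    module
  rw [hsub, norm_smul, Real.norm_of_nonneg (inv_nonneg.2 hS.le), inv_mul_eq_div]
  gcongr
  calc ‖a • (x - z) + b • (y - z) + d • (w - z)‖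
      ≤ ‖a • (x - z)‖ + ‖b • (y - z)‖ + ‖d • (w - z)‖ := norm_add₃_le
    _ = a * ‖x - z‖ + b * ‖y - z‖ + d * ‖w - z‖ := by
      simp only [norm_smul, Real.norm_of_nonneg ha, Real.norm_of_nonneg hb,
        Real.norm_of_nonneg hd]

lemma norm_weightedAverage_sub_le_sum {a b c d : ℝ} (ha : 0 ≤ a) (hb : 0 ≤ b) (hc : 0 ≤ c)
    (hd : 0 ≤ d) (hS : 0 < a + b + c + d) (x y z w : E) :
    ‖(a + b + c + d)⁻¹ • (a • x + b • y + c • z + d • w) - z‖ ≤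
      ‖x - z‖ + ‖y - z‖ + ‖w - z‖ := by
  refine (norm_weightedAverage_sub_le ha hb hd hS x y z w).trans ?_
  rw [div_le_iff₀ hS]
  have := norm_nonneg (x - z); have := norm_nonneg (y - z); have := norm_nonneg (w - z)
  nlinarith

lemma norm_weightedAverage_sub_le_div {a b c d : ℝ} (ha : 0 ≤ a) (hb : 0 ≤ b) (hc : 0 < c)
    (hd : 0 ≤ d) (x y z w : E) :
    ‖(a + b + c + d)⁻¹ • (a • x + b • y + c • z + d • w) - z‖ ≤
      (a * ‖x - z‖ + b * ‖y - z‖ + d * ‖w - z‖) / c :=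
  (norm_weightedAverage_sub_le ha hb hd (by positivity) x y z w).trans <|
    div_le_div_of_nonneg_left (by positivity) hc (by linarith)

lemma tendsto_norm_weightedAverage_sub_of_sq_weight {α β γ δ k : ℝ} (hα : 0 ≤ α) (hβ : 0 ≤ β)
    (hγ : 0 < γ) (hδ : 0 ≤ δ) (hk : 0 < k) (x y z w : E) :
    Tendsto (fun ω : ℝ => ‖(α + ω * β + k * ω ^ 2 * γ + δ)⁻¹ •
      (α • x + (ω * β) • y + (k * ω ^ 2 * γ) • z + δ • w) - z‖) atTop (𝓝 0) := by
  have hlim := tendsto_add_mul_div_mul_sq_atTop (α * ‖x - z‖ + δ * ‖w - z‖) (β * ‖y - z‖) (k * γ)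
  refine tendsto_of_tendsto_of_tendsto_of_le_of_le' tendsto_const_nhds hlim
    (Eventually.of_forall fun _ => norm_nonneg _) ?_
  filter_upwards [eventually_gt_atTop 0] with ω hω
  refine (norm_weightedAverage_sub_le_div hα (by positivity) (by positivity) hδ x y z w).trans
    (le_of_eq ?_)
  ring

end WeightedAverage

/-- Fix points `p₀, p₁, p₂, p₃ ∈ ℝ²` and `k > 0`.  The rational cubic Bézier curves `C_ω` with
weights `(1, ω, kω², 1)` converge to the constant function `p₂` in `L¹` on `[0,1]`:
`∫₀¹ ‖C_ω(u) − p₂‖ du → 0` as `ω → +∞`. -/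
theorem nurbs_weights_different_order_L1_convergence
    (p₀ p₁ p₂ p₃ : EuclideanSpace ℝ (Fin 2)) (k : ℝ) (hk : 0 < k) :
    Tendsto
      (fun ω : ℝ =>
        ∫ u in (0:ℝ)..1,
          ‖(cubicBernstein 0 u + ω * cubicBernstein 1 u + k * ω ^ 2 * cubicBernstein 2 u +
              cubicBernstein 3 u)⁻¹ •
            ((cubicBernstein 0 u) • p₀ + (ω * cubicBernstein 1 u) • p₁ +
              (k * ω ^ 2 * cubicBernstein 2 u) • p₂ + (cubicBernstein 3 u) • p₃) - p₂‖)
      atTop (𝓝 0) := by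
  simp only [intervalIntegral.integral_of_le zero_le_one, integral_Ioc_eq_integral_Ioo]
  rw [show 𝓝 (0 : ℝ) = 𝓝 (∫ _ in Ioo (0 : ℝ) 1, (0 : ℝ)) by simp]
  apply tendsto_integral_filter_of_dominated_convergence
    (bound := fun _ => ‖p₀ - p₂‖ + ‖p₁ - p₂‖ + ‖p₃ - p₂‖)
  · exact Eventually.of_forall fun ω => Measurable.aestronglyMeasurable (by fun_prop)
  · filter_upwards [eventually_gt_atTop 0] with ω hω
    filter_upwards [ae_restrict_mem measurableSet_Ioo] with u hu
    have hB₀ := cubicBernstein_pos (j := 0) (by norm_num) hu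
    have hB₁ := cubicBernstein_pos (j := 1) (by norm_num) hu
    have hB₂ := cubicBernstein_pos (j := 2) (by norm_num) hu
    have hB₃ := cubicBernstein_pos (j := 3) le_rfl hu
    rw [norm_norm]
    exact norm_weightedAverage_sub_le_sum hB₀.le (by positivity) (by positivity) hB₃.le
      (by positivity) _ _ _ _
  · exact integrableOn_const measure_Ioo_lt_top.ne
  · filter_upwards [ae_restrict_mem measurableSet_Ioo] with u hu
    exact tendsto_norm_weightedAverage_sub_of_sq_weight (cubicBernstein_pos (by norm_num) hu).le
      (cubicBernstein_pos (by norm_num) hu).le (cubicBernstein_pos (by norm_num) hu)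
      (cubicBernstein_pos le_rfl hu).le hk _ _ _ _
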